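/- arXiv:0807.2955 — 6 statements merged into one kernel-verified Lean document; each statement's English description precedes it below -/
import Mathlib

section
/- Let c < a < d be real numbers and set δ := (d-c)/2. Let f : ℝ → ℂ be differentiable at every point of [c,a] with derivative f' interval-integrable on [c,a]. Then f(a)/2 = (1/(2δ)) ∫_c^a f(u) du + ∫_c^a ψ((u-a)/(2δ)) f'(u) du + f(c)·(1/2 - (a-c)/(2δ)). -/
open MeasureTheory intervalIntegral

/-- Theorem 1(I) of the paper: for `f` differentiable on `[c,a]` with integrable
derivative, `f(a)/2 = (1/(2δ)) ∫_c^a f + ∫_c^a ψ((u-a)/(2δ)) f'(u) du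
+ f(c)(1/2 - (a-c)/(2δ))`, where `ψ(u) = u - ⌊u⌋ - 1/2` and `δ = (d-c)/2`. -/
theorem fourier_theorem1_I (c a d : ℝ) (hca : c < a) (had : a < d)
    (δ : ℝ) (hδ : δ = (d - c) / 2)
    (f f' : ℝ → ℂ)
    (hdiff : ∀ x ∈ Set.Icc c a, HasDerivAt f (f' x) x)
    (hint : IntervalIntegrable f' volume c a) :
    f a / 2 = ((1 / (2 * δ) : ℝ) : ℂ) * (∫ u in c..a, f u)
      + (∫ u in c..a,
          (((u - a) / (2 * δ) - ⌊(u - a) / (2 * δ)⌋ - 1 / 2 : ℝ) : ℂ) * f' u)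
      + f c * ((1 / 2 : ℂ) - (((a - c) / (2 * δ) : ℝ) : ℂ)) := by
  have hw : (2 : ℝ) * δ = d - c := by rw [hδ]; ring
  have hwpos : (0 : ℝ) < 2 * δ := by rw [hw]; linarith
  have hwne : (2 * δ : ℝ) ≠ 0 := ne_of_gt hwpos
  set g : ℝ → ℂ := fun u => (((u - a) / (2 * δ) + 1 / 2 : ℝ) : ℂ) with hg
  -- replace the sawtooth by the affine function a.e.
  have hcongr : (∫ u in c..a,
      (((u - a) / (2 * δ) - ⌊(u - a) / (2 * δ)⌋ - 1 / 2 : ℝ) : ℂ) * f' u)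
      = ∫ u in c..a, g u * f' u := by
    apply intervalIntegral.integral_congr_ae
    have hne : ∀ᵐ u : ℝ ∂volume, u ≠ a := by
      rw [MeasureTheory.ae_iff]
      simpa using Real.volume_singleton (a := a)
    filter_upwards [hne] with u hu hmem
    rw [Set.uIoc_of_le hca.le] at hmem
    have hua : u < a := lt_of_le_of_ne hmem.2 hu
    have hfloor : ⌊(u - a) / (2 * δ)⌋ = -1 := by
      rw [Int.floor_eq_iff]
      constructor
      · push_cast
        rw [le_div_iff₀ hwpos]
        nlinarith [hmem.1]
      · push_cast
        rw [div_lt_iff₀ hwpos]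
        nlinarith
    rw [hfloor, hg]
    push_cast
    ring_nf
  rw [hcongr]
  -- integration by parts
  have hgderiv : ∀ x ∈ Set.uIcc c a,
      HasDerivAt g (((1 / (2 * δ) : ℝ) : ℂ)) x := by
    intro x _
    have : HasDerivAt (fun u : ℝ => (u - a) / (2 * δ) + 1 / 2) (1 / (2 * δ)) x := by
      simpa using (((hasDerivAt_id x).sub_const a).div_const (2 * δ)).add_const (1 / 2)
    simpa [hg] using this.ofReal_comp
  have hparts := intervalIntegral.integral_mul_deriv_eq_deriv_mul
    (u := g) (v := f) (u' := fun _ => ((1 / (2 * δ) : ℝ) : ℂ)) (v' := f')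
    hgderiv
    (fun x hx => hdiff x (by rwa [Set.uIcc_of_le hca.le] at hx))
    (intervalIntegrable_const) hint
  rw [hparts, intervalIntegral.integral_const_mul]
  have hga : g a = 1 / 2 := by simp [hg]
  have hgc : g c = (((c - a) / (2 * δ) + 1 / 2 : ℝ) : ℂ) := rfl
  rw [hga, hgc]
  have key : (((c - a) / (2 * δ) + 1 / 2 : ℝ) : ℂ)
      = (1 / 2 : ℂ) - (((a - c) / (2 * δ) : ℝ) : ℂ) := by
    push_cast; ring
  rw [key]
  ring
end

section
/- Let c < a < d be real numbers and set δ := (d-c)/2. Let f : ℝ → ℂ be differentiable at every point of [a,d] with derivative f' interval-integrable on [a,d]. Then f(a)/2 = (1/(2δ)) ∫_a^d f(u) du - ∫_a^d ψ((a-u)/(2δ)) f'(u) du + f(d)·(1/2 - (d-a)/(2δ)). -/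
open MeasureTheory intervalIntegral

/-! On `(a, a + p]` the argument `(a - u) / p` lies in `[-1, 0)`, so the sawtooth
`ψ((a - u) / p)` is the affine function `(a - u) / p + 1 / 2` there. Integrating it by
parts against `f'` produces `f a / 2` from the endpoint `a`, the term `f d` with the
affine weight from the endpoint `d`, and `(1 / p) ∫ f` from its constant derivative.
With `p = 2δ = d - c` and `c < a`, the whole interval `(a, d]` lies in `(a, a + p]`. -/

lemma sawtooth_div_eq_of_mem_Ioc {a p u : ℝ} (hp : 0 < p) (hu : u ∈ Set.Ioc a (a + p)) :
    (a - u) / p - ⌊(a - u) / p⌋ - 1 / 2 = (a - u) / p + 1 / 2 := by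
  have hfloor : ⌊(a - u) / p⌋ = -1 := by
    rw [Int.floor_eq_iff, le_div_iff₀ hp, div_lt_iff₀ hp]
    push_cast
    constructor <;> linarith [hu.1, hu.2]
  rw [hfloor]
  push_cast
  ring

lemma integral_affine_mul_deriv (a d p : ℝ) {f f' : ℝ → ℂ}
    (hf : ∀ x ∈ Set.uIcc a d, HasDerivAt f (f' x) x) (hf' : IntervalIntegrable f' volume a d) :
    ∫ u in a..d, (((a - u) / p + 1 / 2 : ℝ) : ℂ) * f' u
      = (((a - d) / p + 1 / 2 : ℝ) : ℂ) * f d - f a / 2 + ((1 / p : ℝ) : ℂ) * ∫ u in a..d, f u := by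
  have hg : ∀ x ∈ Set.uIcc a d,
      HasDerivAt (fun u : ℝ => (((a - u) / p + 1 / 2 : ℝ) : ℂ)) ((-(1 / p) : ℝ) : ℂ) x := by
    intro x _
    refine HasDerivAt.ofReal_comp ?_
    exact ((((hasDerivAt_id x).const_sub a).div_const p).add_const _).congr_deriv (by ring)
  rw [integral_mul_deriv_eq_deriv_mul hg hf intervalIntegrable_const hf', intervalIntegral.integral_const_mul]
  push_cast
  ring

/-- Theorem 1(II) of the paper: for `f` differentiable on `[a,d]` with integrable
derivative, `f(a)/2 = (1/(2δ)) ∫_a^d f - ∫_a^d ψ((a-u)/(2δ)) f'(u) du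
+ f(d)(1/2 - (d-a)/(2δ))`, where `ψ(u) = u - ⌊u⌋ - 1/2` and `δ = (d-c)/2`. -/
theorem fourier_theorem1_II (c a d : ℝ) (hca : c < a) (had : a < d)
    (δ : ℝ) (hδ : δ = (d - c) / 2)
    (f f' : ℝ → ℂ)
    (hdiff : ∀ x ∈ Set.Icc a d, HasDerivAt f (f' x) x)
    (hint : IntervalIntegrable f' volume a d) :
    f a / 2 = ((1 / (2 * δ) : ℝ) : ℂ) * (∫ u in a..d, f u)
      - (∫ u in a..d,
          (((a - u) / (2 * δ) - ⌊(a - u) / (2 * δ)⌋ - 1 / 2 : ℝ) : ℂ) * f' u)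
      + f d * ((1 / 2 : ℂ) - (((d - a) / (2 * δ) : ℝ) : ℂ)) := by
  have hp : 0 < 2 * δ := by rw [hδ]; linarith
  have hsawtooth : (∫ u in a..d,
        (((a - u) / (2 * δ) - ⌊(a - u) / (2 * δ)⌋ - 1 / 2 : ℝ) : ℂ) * f' u)
      = ∫ u in a..d, (((a - u) / (2 * δ) + 1 / 2 : ℝ) : ℂ) * f' u := by
    refine integral_congr_ae (ae_of_all _ fun u hu => ?_)
    rw [Set.uIoc_of_le had.le] at hu
    rw [sawtooth_div_eq_of_mem_Ioc hp ⟨hu.1, by linarith [hu.2]⟩]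
  rw [hsawtooth, integral_affine_mul_deriv a d (2 * δ)
    (fun x hx => hdiff x (Set.uIcc_of_le had.le ▸ hx)) hint]
  push_cast
  ring
end

section
/- Let c < a < d be real numbers and set δ := (d-c)/2. Let f : ℝ → ℂ be differentiable at every point of [c,d] with derivative f' interval-integrable on [c,d], and suppose f(c) = f(d). Then f(a) = (1/(2δ)) ∫_c^d f(u) du + ∫_c^d ψ((u-a)/(2δ)) f'(u) du. -/
/-!
On `[c, d]` the floor of `(u - a) / (d - c)` is `-1` to the left of `a` and `0` to the right, so
the sawtooth weight is an affine function of slope `1 / (d - c)` plus the jump `1_{u ≤ a}`. Against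
`f'`, the affine part integrates by parts to `f c - (1 / (d - c)) ∫ f` (using `f c = f d`), and the
jump contributes `∫_c^a f' = f a - f c`.
-/

open MeasureTheory intervalIntegral Set

theorem IntervalIntegrable.indicator {E : Type*} [NormedAddCommGroup E] {f : ℝ → E}
    {μ : Measure ℝ} {a b : ℝ} {s : Set ℝ} (hf : IntervalIntegrable f μ a b)
    (hs : MeasurableSet s) : IntervalIntegrable (s.indicator f) μ a b :=
  ⟨hf.1.indicator hs, hf.2.indicator hs⟩

theorem intervalIntegral.integral_add_indicator_le {E : Type*} [NormedAddCommGroup E]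
    [NormedSpace ℝ E] {g h : ℝ → E} {c a d : ℝ} (ha : a ∈ Icc c d)
    (hg : IntervalIntegrable g volume c d) (hh : IntervalIntegrable h volume c d) :
    ∫ u in c..d, (g u + {x | x ≤ a}.indicator h u) = (∫ u in c..d, g u) + ∫ u in c..a, h u := by
  rw [← integral_indicator ha]
  exact integral_add hg (hh.indicator measurableSet_Iic)

theorem intervalIntegral.integral_mul_deriv_of_hasDerivAt_const {𝕜 : Type*}
    [NormedDivisionRing 𝕜] [NormedAlgebra ℝ 𝕜] [CompleteSpace 𝕜] {w f f' : ℝ → 𝕜} {α : 𝕜}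
    {c d : ℝ} (hw : ∀ x, HasDerivAt w α x) (hf : ∀ x ∈ uIcc c d, HasDerivAt f (f' x) x)
    (hf' : IntervalIntegrable f' volume c d) :
    ∫ u in c..d, w u * f' u = w d * f d - w c * f c - α * ∫ u in c..d, f u := by
  rw [integral_mul_deriv_eq_deriv_mul (fun x _ => hw x) hf intervalIntegrable_const hf',
    integral_const_mul]

theorem floor_sub_div_sub_eq_ite {c a d u : ℝ} (hca : c < a) (had : a ≤ d)
    (hu : u ∈ Icc c d) (hua : u ≠ a) :
    ⌊(u - a) / (d - c)⌋ = if u ≤ a then -1 else 0 := by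
  have hL : 0 < d - c := by linarith
  split_ifs with h
  · have hlt : u < a := lt_of_le_of_ne h hua
    rw [Int.floor_eq_iff, le_div_iff₀ hL, div_lt_iff₀ hL]
    push_cast
    constructor <;> linarith [hu.1]
  · rw [Int.floor_eq_zero_iff, mem_Ico, div_lt_one hL]
    exact ⟨div_nonneg (by linarith) hL.le, by linarith [hu.2]⟩

/-- Theorem 1(III) of the paper: for `f` differentiable on `[c,d]` with integrable
derivative and `f(c) = f(d)`, `f(a) = (1/(2δ)) ∫_c^d f + ∫_c^d ψ((u-a)/(2δ)) f'(u) du`,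
where `ψ(u) = u - ⌊u⌋ - 1/2` and `δ = (d-c)/2`. -/
theorem fourier_theorem1_III (c a d : ℝ) (hca : c < a) (had : a < d)
    (δ : ℝ) (hδ : δ = (d - c) / 2)
    (f f' : ℝ → ℂ)
    (hdiff : ∀ x ∈ Set.Icc c d, HasDerivAt f (f' x) x)
    (hint : IntervalIntegrable f' volume c d)
    (hper : f c = f d) :
    f a = ((1 / (2 * δ) : ℝ) : ℂ) * (∫ u in c..d, f u)
      + (∫ u in c..d,
          (((u - a) / (2 * δ) - ⌊(u - a) / (2 * δ)⌋ - 1 / 2 : ℝ) : ℂ) * f' u) := by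
  have hL : 2 * δ = d - c := by rw [hδ]; ring
  have hcd : c < d := hca.trans had
  set w : ℝ → ℂ := fun u => (((u - a) / (d - c) - 1 / 2 : ℝ) : ℂ) with hw
  have hw' : ∀ x, HasDerivAt w ((1 / (d - c) : ℝ) : ℂ) x := fun x =>
    HasDerivAt.ofReal_comp (by
      simpa using (((hasDerivAt_id x).sub_const a).div_const (d - c)).sub_const (1 / 2))
  have hsaw : ∀ᵐ u, u ∈ uIoc c d →
      (((u - a) / (d - c) - ⌊(u - a) / (d - c)⌋ - 1 / 2 : ℝ) : ℂ) * f' u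
        = w u * f' u + {x | x ≤ a}.indicator f' u := by
    filter_upwards [Measure.ae_ne volume a] with u hua hu
    rw [uIoc_of_le hcd.le] at hu
    rw [floor_sub_div_sub_eq_ite hca had.le (Ioc_subset_Icc_self hu) hua]
    simp only [hw, indicator_apply, mem_ofPred_eq]
    split_ifs <;> push_cast <;> ring
  have hftc : ∫ u in c..a, f' u = f a - f c :=
    integral_eq_sub_of_hasDerivAt
      (fun x hx => hdiff x (Icc_subset_Icc_right had.le (uIcc_of_le hca.le ▸ hx)))
      (hint.mono_set (by
        rw [uIcc_of_le hca.le, uIcc_of_le hcd.le]; exact Icc_subset_Icc_right had.le))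
  rw [hL, integral_congr_ae hsaw,
    integral_add_indicator_le ⟨hca.le, had.le⟩
      (hint.continuousOn_mul fun x _ => (hw' x).continuousAt.continuousWithinAt) hint,
    integral_mul_deriv_of_hasDerivAt_const hw' (fun x hx => hdiff x (uIcc_of_le hcd.le ▸ hx)) hint,
    hftc, hper]
  have hLne : (d : ℂ) - c ≠ 0 := sub_ne_zero.2 (Complex.ofReal_injective.ne hcd.ne')
  simp only [hw]
  push_cast
  field_simp
  ring
end

section
/- Let a ∈ ℝ and δ > 0, and let f : ℝ → ℂ be differentiable at every point of [a-δ, a] with derivative f' interval-integrable on [a-δ, a]. Then the left-hand local Fourier series of f at a converges with symmetric partial sums, and f(a)/2 = (1/(2δ)) lim_{M→∞} ∑_{n=-M}^{M} e^{iπna/δ} ∫_{a-δ}^{a} f(u) e^{-iπnu/δ} du. -/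
/-!
Put `F x = f (a - δ x / π)`. The substitution `x = π (a - u) / δ` turns the symmetric partial sum
into `(δ / π) ∫₀^π F(x) D_M(x) dx`, where `D_M(x) = ∑_{|n| ≤ M} e^{inx}` is the Dirichlet kernel.
Over the half period, `∫₀^π D_M = π`, because each `∫₀^π cos(kx) dx = sin(kπ)/k` vanishes. Since
`D_M(x) sin(x/2) = sin((M + ½)x)`, the integral equals
`π F(0) + ∫₀^π q(x) sin((M + ½)x) dx` with `q(x) = (F x - F 0) / sin(x/2)`. Differentiability
of `F` at `0` extends `q` continuously to `[0, π]`, so `q` is integrable and the last integral tends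
to `0` by the Riemann–Lebesgue lemma.
-/

open MeasureTheory intervalIntegral Filter Topology Complex
open scoped Real

lemma integral_cos_nat_mul_eq_zero (k : ℕ) (hk : k ≠ 0) : ∫ x in (0 : ℝ)..π, cos (k * x) = 0 := by
  have hk' : (k : ℂ) ≠ 0 := Nat.cast_ne_zero.mpr hk
  have hderiv (x : ℝ) : HasDerivAt (fun y : ℝ => sin (k * y) / k) (cos (k * x)) x := by
    have := (((hasDerivAt_id (x : ℂ)).const_mul (k : ℂ)).csin.comp_ofReal).div_const (k : ℂ)
    simpa [hk'] using this
  rw [integral_eq_sub_of_hasDerivAt (fun x _ => hderiv x)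
    (Continuous.intervalIntegrable (by fun_prop) _ _)]
  simp [Complex.sin_nat_mul_pi]

noncomputable def dirichletKernel (M : ℕ) (x : ℝ) : ℂ :=
  ∑ n ∈ Finset.Icc (-(M : ℤ)) M, exp (n * x * I)

lemma dirichletKernel_zero (x : ℝ) : dirichletKernel 0 x = 1 := by
  simp [dirichletKernel]

lemma dirichletKernel_succ (M : ℕ) (x : ℝ) :
    dirichletKernel (M + 1) x = dirichletKernel M x + 2 * cos ((M + 1) * x) := by
  rw [dirichletKernel, dirichletKernel, Nat.cast_succ, Finset.sum_Icc_succ_eq_add_endpoints,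
    two_cos]
  push_cast
  ring_nf

lemma dirichletKernel_mul_sin_half (M : ℕ) (x : ℝ) :
    dirichletKernel M x * sin (x / 2) = sin ((M + 1 / 2) * x) := by
  induction M with
  | zero => rw [dirichletKernel_zero]; ring_nf
  | succ M ih =>
    have h₁ : ((M + 1 : ℕ) + 1 / 2) * (x : ℂ) = (M + 1) * x + x / 2 := by push_cast; ring
    have h₂ : (M + 1 / 2) * (x : ℂ) = (M + 1) * x - x / 2 := by ring
    rw [dirichletKernel_succ, add_mul, ih, h₁, h₂, sin_add, sin_sub]
    ring

theorem continuous_dirichletKernel (M : ℕ) : Continuous (dirichletKernel M) := by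
  unfold dirichletKernel
  fun_prop

theorem integral_dirichletKernel (M : ℕ) : ∫ x in (0 : ℝ)..π, dirichletKernel M x = π := by
  induction M with
  | zero => simp [dirichletKernel_zero]
  | succ M ih =>
    simp_rw [dirichletKernel_succ]
    rw [integral_add ((continuous_dirichletKernel M).intervalIntegrable _ _)
      (Continuous.intervalIntegrable (by fun_prop) _ _), ih,
      intervalIntegral.integral_const_mul]
    have := integral_cos_nat_mul_eq_zero (M + 1) M.succ_ne_zero
    push_cast at this
    simp [this]

theorem tendsto_setIntegral_mul_exp_cocompact (G : ℝ → ℂ) {s : Set ℝ} (hs : MeasurableSet s) :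
    Tendsto (fun t : ℝ => ∫ x in s, G x * exp (t * x * I)) (cocompact ℝ) (𝓝 0) := by
  have hc : -(2 * π)⁻¹ ≠ 0 := by simp [Real.pi_ne_zero]
  refine ((Real.tendsto_integral_exp_smul_cocompact (s.indicator G)).comp
    (tendsto_cocompact_mul_left₀ hc)).congr fun t => ?_
  rw [Function.comp_apply, ← Set.indicator_smul, MeasureTheory.integral_indicator hs]
  refine setIntegral_congr_fun hs fun x _ => ?_
  rw [Circle.smul_def, Real.fourierChar_apply, smul_eq_mul, mul_comm]
  congr 2
  push_cast
  field_simp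

theorem tendsto_integral_mul_exp_cocompact (G : ℝ → ℂ) (a b : ℝ) :
    Tendsto (fun t : ℝ => ∫ x in a..b, G x * exp (t * x * I)) (cocompact ℝ) (𝓝 0) := by
  have := (tendsto_setIntegral_mul_exp_cocompact G (measurableSet_Ioc (a := a) (b := b))).sub
    (tendsto_setIntegral_mul_exp_cocompact G (measurableSet_Ioc (a := b) (b := a)))
  rwa [sub_zero] at this

theorem tendsto_integral_mul_sin_cocompact {G : ℝ → ℂ} {a b : ℝ}
    (hG : IntervalIntegrable G volume a b) :
    Tendsto (fun t : ℝ => ∫ x in a..b, G x * sin (t * x)) (cocompact ℝ) (𝓝 0) := by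
  have hexp (t : ℝ) : IntervalIntegrable (fun x => G x * exp (t * x * I)) volume a b :=
    hG.mul_continuousOn (by fun_prop)
  have hsplit (t : ℝ) : ∫ x in a..b, G x * sin (t * x) = I / 2 *
      ((∫ x in a..b, G x * exp (↑(-1 * t) * x * I)) - ∫ x in a..b, G x * exp (t * x * I)) := by
    rw [← integral_sub (hexp _) (hexp _), ← intervalIntegral.integral_const_mul]
    congr 1 with x
    rw [sin]
    push_cast
    ring_nf
  have hneg := (tendsto_integral_mul_exp_cocompact G a b).comp
    (tendsto_cocompact_mul_left₀ (neg_ne_zero.mpr one_ne_zero))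
  simpa [hsplit] using ((hneg.sub (tendsto_integral_mul_exp_cocompact G a b)).const_mul (I / 2))

theorem HasDerivWithinAt.tendsto_sub_div_sub {𝕜 𝕜' : Type*} [NontriviallyNormedField 𝕜]
    [NormedField 𝕜'] [NormedAlgebra 𝕜 𝕜'] {f g : 𝕜 → 𝕜'} {f' g' : 𝕜'} {s : Set 𝕜} {x : 𝕜}
    (hf : HasDerivWithinAt f f' s x) (hg : HasDerivWithinAt g g' s x) (hg' : g' ≠ 0) :
    Tendsto (fun y => (f y - f x) / (g y - g x)) (𝓝[s \ {x}] x) (𝓝 (f' / g')) := by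
  refine ((hasDerivWithinAt_iff_tendsto_slope.mp hf).div
    (hasDerivWithinAt_iff_tendsto_slope.mp hg) hg').congr' ?_
  filter_upwards [self_mem_nhdsWithin] with y hy
  have hyx : algebraMap 𝕜 𝕜' (y - x)⁻¹ ≠ 0 := by simpa [sub_eq_zero] using hy.2
  rw [Pi.div_apply, slope_def_module, slope_def_module, Algebra.smul_def, Algebra.smul_def,
    mul_div_mul_left _ _ hyx]

lemma sin_half_ne_zero {x : ℝ} (hx₀ : 0 < x) (hx : x < 2 * π) : sin (x / 2) ≠ 0 := by
  rw [← ofReal_ofNat, ← ofReal_div, ← ofReal_sin, ofReal_ne_zero]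
  exact (Real.sin_pos_of_pos_of_lt_pi (by linarith) (by linarith)).ne'

theorem intervalIntegrable_sub_div_sin_half {F : ℝ → ℂ} {F' : ℂ}
    (hF : ContinuousOn F (Set.Icc 0 π)) (hF₀ : HasDerivWithinAt F F' (Set.Icc 0 π) 0) :
    IntervalIntegrable (fun x : ℝ => (F x - F 0) / sin (x / 2)) volume 0 π := by
  set q := fun x : ℝ => (F x - F 0) / sin (x / 2)
  have hsin : HasDerivWithinAt (fun x : ℝ => sin (x / 2)) (1 / 2) (Set.Icc 0 π) 0 := by
    have := ((((hasDerivAt_id (0 : ℂ)).div_const 2).csin).comp_ofReal).hasDerivWithinAt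
      (s := Set.Icc 0 π)
    simpa using this
  have hq : ContinuousOn (Function.update q 0 (F' / (1 / 2))) (Set.Icc 0 π) := by
    refine continuousOn_update_iff.mpr ⟨fun x hx => ?_, fun _ => ?_⟩
    · have hx₀ : 0 < x := lt_of_le_of_ne hx.1.1 (Ne.symm hx.2)
      exact ((hF x hx.1).sub continuousWithinAt_const).div (by fun_prop)
        (sin_half_ne_zero hx₀ (by linarith [hx.1.2, Real.pi_pos])) |>.mono Set.sdiff_subset
    · simpa [q] using hF₀.tendsto_sub_div_sub hsin (by norm_num)
  refine (hq.intervalIntegrable_of_Icc Real.pi_pos.le).congr fun x hx => ?_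
  rw [Set.uIoc_of_le Real.pi_pos.le] at hx
  exact Function.update_of_ne hx.1.ne' _ _

theorem tendsto_integral_mul_dirichletKernel {F : ℝ → ℂ}
    (hF : IntervalIntegrable (fun x : ℝ => (F x - F 0) / sin (x / 2)) volume 0 π) :
    Tendsto (fun M : ℕ => ∫ x in 0..π, F x * dirichletKernel M x) atTop (𝓝 (π * F 0)) := by
  set q := fun x : ℝ => (F x - F 0) / sin (x / 2)
  have hsplit (M : ℕ) : ∫ x in 0..π, F x * dirichletKernel M x =
      π * F 0 + ∫ x in 0..π, q x * sin (↑((M : ℝ) + 1 / 2) * x) := by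
    have hpt : ∀ x ∈ Set.uIoc 0 π, F x * dirichletKernel M x =
        F 0 * dirichletKernel M x + q x * sin (↑((M : ℝ) + 1 / 2) * x) := by
      intro x hx
      rw [Set.uIoc_of_le Real.pi_pos.le] at hx
      push_cast
      rw [← dirichletKernel_mul_sin_half]
      simp only [q]
      field_simp [sin_half_ne_zero hx.1 (by linarith [hx.2, Real.pi_pos])]
      ring
    rw [integral_congr_ae (Eventually.of_forall hpt),
      integral_add ((continuous_dirichletKernel M).intervalIntegrable _ _ |>.const_mul _)
        (hF.mul_continuousOn (by fun_prop)),
      intervalIntegral.integral_const_mul, integral_dirichletKernel, mul_comm]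
  have hfreq : Tendsto (fun M : ℕ => (M : ℝ) + 1 / 2) atTop (cocompact ℝ) :=
    (tendsto_atTop_add_const_right _ _ tendsto_natCast_atTop_atTop).mono_right atTop_le_cocompact
  simpa [hsplit] using ((tendsto_integral_mul_sin_cocompact hF).comp hfreq).const_add (π * F 0)

theorem sum_exp_mul_integral_eq_integral_mul_dirichletKernel {f : ℝ → ℂ} {a δ : ℝ} (hδ : δ ≠ 0)
    (hf : IntervalIntegrable f volume (a - δ) a) (M : ℕ) :
    ∑ n ∈ Finset.Icc (-(M : ℤ)) M, exp (I * π * n * a / δ) *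
        ∫ u in (a - δ)..a, f u * exp (-(I * π * n * u) / δ) =
      δ / π * ∫ x in 0..π, f (a - δ / π * x) * dirichletKernel M x := by
  have hterm (n : ℤ) : exp (I * π * n * a / δ) * ∫ u in (a - δ)..a, f u * exp (-(I * π * n * u) / δ)
      = ∫ u in (a - δ)..a, f u * exp (n * ↑(π / δ * a - π / δ * u) * I) := by
    rw [← intervalIntegral.integral_const_mul]
    refine integral_congr fun u _ => ?_
    rw [mul_left_comm, ← exp_add]
    congr 2
    push_cast
    field_simp
    ring
  simp_rw [hterm]
  rw [← integral_finsetSum fun n _ => hf.mul_continuousOn (by fun_prop)]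
  simp_rw [← Finset.mul_sum]
  have hsub := integral_comp_sub_mul (a := a - δ) (b := a)
    (fun x => f (a - δ / π * x) * dirichletKernel M x)
    (div_ne_zero Real.pi_ne_zero hδ) (π / δ * a)
  have hcancel (u : ℝ) : a - δ / π * (π / δ * a - π / δ * u) = u := by
    field_simp
    ring
  have hlower : π / δ * a - π / δ * a = 0 := sub_self _
  have hupper : π / δ * a - π / δ * (a - δ) = π := by
    field_simp
    ring
  simp only [hcancel, hlower, hupper] at hsub
  change ∫ u in (a - δ)..a, f u * dirichletKernel M (π / δ * a - π / δ * u) = _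
  rw [hsub, real_smul, inv_div]
  push_cast
  rfl

lemma mapsTo_sub_div_pi_mul_Icc {a δ : ℝ} (hδ : 0 ≤ δ) :
    Set.MapsTo (fun x : ℝ => a - δ / π * x) (Set.Icc 0 π) (Set.Icc (a - δ) a) := by
  intro x hx
  have : δ / π * x ≤ δ := by
    rw [div_mul_eq_mul_div, div_le_iff₀ Real.pi_pos]
    exact mul_le_mul_of_nonneg_left hx.2 hδ
  exact ⟨by linarith, by linarith [mul_nonneg (div_nonneg hδ Real.pi_pos.le) hx.1]⟩

theorem fourier_corollary_left_general (a δ : ℝ) (hδ : 0 < δ)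
    (f f' : ℝ → ℂ)
    (hdiff : ∀ x ∈ Set.Icc (a - δ) a, HasDerivAt f (f' x) x) :
    Filter.Tendsto (fun M : ℕ => ((1 / (2 * δ) : ℝ) : ℂ) *
        ∑ n ∈ Finset.Icc (-(M : ℤ)) (M : ℤ),
          Complex.exp (Complex.I * Real.pi * n * a / δ) *
            ∫ u in (a - δ)..a, f u * Complex.exp (-(Complex.I * Real.pi * n * u) / δ))
      Filter.atTop (nhds (f a / 2)) := by
  have hf : ContinuousOn f (Set.Icc (a - δ) a) :=
    fun x hx => (hdiff x hx).continuousAt.continuousWithinAt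
  set F := fun x : ℝ => f (a - δ / π * x)
  have hF₀ : HasDerivWithinAt F (-(δ / π) • f' a) (Set.Icc 0 π) 0 :=
    (hdiff a ⟨by linarith, le_rfl⟩).scomp_hasDerivWithinAt_of_eq 0
      (by simpa using (((hasDerivAt_id 0).const_mul (δ / π)).const_sub a).hasDerivWithinAt)
      (by simp)
  have hlim : Tendsto (fun M : ℕ => ∫ x in 0..π, F x * dirichletKernel M x) atTop
      (𝓝 (π * F 0)) :=
    tendsto_integral_mul_dirichletKernel (intervalIntegrable_sub_div_sin_half
      (hf.comp (by fun_prop) (mapsTo_sub_div_pi_mul_Icc hδ.le)) hF₀)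
  have hval : (2 * π : ℂ)⁻¹ * (π * F 0) = f a / 2 := by
    simp only [F, mul_zero, sub_zero]
    field_simp
  rw [← hval]
  refine (hlim.const_mul _).congr fun M => ?_
  rw [sum_exp_mul_integral_eq_integral_mul_dirichletKernel hδ.ne'
    (hf.intervalIntegrable_of_Icc (by linarith)), ← mul_assoc]
  congr 1
  push_cast
  field_simp [ofReal_ne_zero.mpr hδ.ne']

/-- Corollary I of the paper (left-hand local Fourier series): for `f` differentiable
on `[a-δ, a]` with integrable derivative,
`f(a)/2 = (1/(2δ)) lim_{M→∞} ∑_{n=-M}^{M} e^{iπna/δ} ∫_{a-δ}^{a} f(u) e^{-iπnu/δ} du`. -/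
theorem fourier_corollary_left (a δ : ℝ) (hδ : 0 < δ)
    (f f' : ℝ → ℂ)
    (hdiff : ∀ x ∈ Set.Icc (a - δ) a, HasDerivAt f (f' x) x)
    (hint : IntervalIntegrable f' volume (a - δ) a) :
    Filter.Tendsto (fun M : ℕ => ((1 / (2 * δ) : ℝ) : ℂ) *
        ∑ n ∈ Finset.Icc (-(M : ℤ)) (M : ℤ),
          Complex.exp (Complex.I * Real.pi * n * a / δ) *
            ∫ u in (a - δ)..a, f u * Complex.exp (-(Complex.I * Real.pi * n * u) / δ))
      Filter.atTop (nhds (f a / 2)) :=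
  fourier_corollary_left_general a δ hδ f f' hdiff
end

section
/- Let q ≥ 1 be an integer and let f : ℝ → ℂ be differentiable at every point of [0,1] with derivative f' interval-integrable on [0,1], and with f(0) = f(1). For integers s with 1 ≤ s ≤ q-1 define c(s,q) := -(1/(2πi))·(1/s - 2s·∑_{m=1}^{∞} 1/(m²q² - s²)) and Ψ_s(u) := c(s,q) - (1/q)·(1/2 + ∑_{ℓ=1}^{⌊qu⌋} e^{2πiℓs/q}) for u ∈ (0,1]; define Ψ_0(u) := (1/q)·(qu - ⌊qu⌋ - 1/2). Then for every integer a with 1 ≤ a ≤ q: f(a/q) = (∫_0^1 f(u) du + ∫_0^1 Ψ_0(u) f'(u) du) + ∑_{s=1}^{q-1} e^{-2πisa/q} ∫_0^1 Ψ_s(u) f'(u) du. In particular f(a/q) = ∑_{r=0}^{q-1} b_r e^{2πira/q}, a finite Fourier series modulo q whose coefficients b_0 := ∫_0^1 f + ∫_0^1 Ψ_0 f' and b_r := ∫_0^1 Ψ_{q-r}(u) f'(u) du (for 1 ≤ r ≤ q-1) do not depend on a. -/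
/-!
On each interval `(k/q, (k+1)/q)` the function `Ψ_0` is `u` minus the midpoint, and for `s ≥ 1`
the function `Ψ_s` is constant. Integrating by parts piece by piece, `∫ f + ∫ Ψ_0 f'` becomes the
trapezoid sum `(1/q) ∑ f(k/q)`, while `∫ Ψ_s f'` becomes a Stieltjes sum of the partial sums of
`e^{2πiℓs/q}` against the increments of `k ↦ f(k/q)`. Abel summation, `f(0) = f(1)` and
`∑_{ℓ=1}^{q} e^{2πiℓs/q} = 0` turn it into `(1/q) ∑ e^{2πiks/q} f(k/q)`; the constant `c(s,q)`
only contributes `c(s,q) (f(1) - f(0)) = 0`. So these integrals are the discrete Fourier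
coefficients of `k ↦ f(k/q)`, and the formula is discrete Fourier inversion.
-/

open MeasureTheory intervalIntegral

theorem Finset.sum_range_partialSum_mul_sub {R : Type*} [CommRing R] (w F : ℕ → R) (n : ℕ) :
    ∑ k ∈ Finset.range n, (∑ j ∈ Finset.range k, w j) * (F (k + 1) - F k) =
      (∑ j ∈ Finset.range n, w j) * F n - ∑ k ∈ Finset.range n, w k * F (k + 1) := by
  induction n with
  | zero => simp
  | succ n ih => simp only [Finset.sum_range_succ, ih]; ring

theorem Finset.sum_range_sub_partialSum_mul_sub {R : Type*} [CommRing R] (A : R) (w F : ℕ → R)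
    {n : ℕ} (hw : ∑ j ∈ Finset.range n, w j = 0) (hF : F n = F 0) :
    ∑ k ∈ Finset.range n, (A - ∑ j ∈ Finset.range k, w j) * (F (k + 1) - F k) =
      ∑ k ∈ Finset.range n, w k * F (k + 1) := by
  rw [Finset.sum_congr rfl fun k _ => sub_mul A _ _, Finset.sum_sub_distrib, ← Finset.mul_sum,
    Finset.sum_range_sub, hF, sub_self, mul_zero, zero_sub, Finset.sum_range_partialSum_mul_sub,
    hw, zero_mul, zero_sub, neg_neg]

theorem Finset.sum_Icc_one_natCast {M : Type*} [AddCommMonoid M] (g : ℤ → M) (n : ℕ) :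
    ∑ ℓ ∈ Finset.Icc (1 : ℤ) n, g ℓ = ∑ j ∈ Finset.range n, g (j + 1) := by
  induction n with
  | zero => simp
  | succ n ih =>
    have hIcc : Finset.Icc (1 : ℤ) (n + 1 : ℕ) = insert ((n : ℤ) + 1) (Finset.Icc (1 : ℤ) n) := by
      ext; simp only [Finset.mem_Icc, Finset.mem_insert]; omega
    rw [hIcc, Finset.sum_insert (by simp), ih, Finset.sum_range_succ, add_comm]

theorem Finset.sum_range_eq_add_sum_Icc {M : Type*} [AddCommMonoid M] {q : ℕ} (hq : q ≠ 0)
    (g : ℕ → M) : ∑ s ∈ Finset.range q, g s = g 0 + ∑ s ∈ Finset.Icc 1 (q - 1), g s := by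
  have hrange : Finset.range q = insert 0 (Finset.Icc 1 (q - 1)) := by
    ext; simp only [Finset.mem_range, Finset.mem_insert, Finset.mem_Icc]; omega
  rw [hrange, Finset.sum_insert (by simp)]

theorem Finset.sum_Icc_one_sub_reflect {M : Type*} [AddCommMonoid M] (g : ℕ → M) (q : ℕ) :
    ∑ r ∈ Finset.Icc 1 (q - 1), g (q - r) = ∑ s ∈ Finset.Icc 1 (q - 1), g s := by
  refine Finset.sum_nbij' (q - ·) (q - ·) ?_ ?_ ?_ ?_ (fun _ _ => rfl) <;>
    intro r hr <;> simp only [Finset.mem_Icc] at hr ⊢ <;> omega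

namespace IsPrimitiveRoot

variable {R : Type*} [CommRing R] [IsDomain R] {ω : R} {q : ℕ}

theorem sum_range_pow_mul (hω : IsPrimitiveRoot ω q) (m : ℕ) :
    ∑ s ∈ Finset.range q, ω ^ (s * m) = if q ∣ m then (q : R) else 0 := by
  simp_rw [mul_comm _ m, pow_mul]
  split_ifs with h
  · simp [(hω.pow_eq_one_iff_dvd m).2 h]
  · have hne : ω ^ m - 1 ≠ 0 := sub_ne_zero.2 (mt (hω.pow_eq_one_iff_dvd m).1 h)
    refine (mul_eq_zero.1 ?_).resolve_right hne
    rw [geom_sum_mul, ← pow_mul, mul_comm, pow_mul, hω.pow_eq_one, one_pow, sub_self]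

theorem sum_range_pow_mul_succ_eq_zero (hω : IsPrimitiveRoot ω q) {s : ℕ} (hs : ¬q ∣ s) :
    ∑ j ∈ Finset.range q, ω ^ (s * (j + 1)) = 0 := by
  have hsum := hω.sum_range_pow_mul s
  rw [if_neg hs] at hsum
  simp only [mul_comm _ s, pow_mul] at hsum
  simp only [pow_mul, pow_succ, ← Finset.sum_mul, hsum, zero_mul]

theorem sum_range_pow_mul_sum_range (hω : IsPrimitiveRoot ω q) (F : ℕ → R) {a : ℕ}
    (ha : a ∈ Finset.Icc 1 q) :
    ∑ s ∈ Finset.range q, ω ^ (s * (q - a)) *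
      ∑ k ∈ Finset.range q, ω ^ (s * (k + 1)) * F (k + 1) = q * F a := by
  obtain ⟨ha1, ha2⟩ := Finset.mem_Icc.1 ha
  have hdvd : ∀ k ∈ Finset.range q, q ∣ q - a + (k + 1) ↔ k = a - 1 := fun k hk => by
    have hk := Finset.mem_range.1 hk
    refine ⟨fun h => ?_, fun h => by rw [h, Nat.sub_add_cancel ha1, Nat.sub_add_cancel ha2]⟩
    have := Nat.eq_of_dvd_of_lt_two_mul (by omega) h (by omega)
    omega
  simp_rw [Finset.mul_sum, ← mul_assoc, ← pow_add, ← mul_add]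
  rw [Finset.sum_comm]
  simp_rw [← Finset.sum_mul, hω.sum_range_pow_mul]
  rw [Finset.sum_congr rfl fun k hk => by rw [if_congr (hdvd k hk) rfl rfl, ite_mul, zero_mul],
    Finset.sum_ite_eq', if_pos (Finset.mem_range.2 (by omega)), Nat.sub_add_cancel ha1]

end IsPrimitiveRoot

theorem Monotone.uIcc_succ_subset_Icc {x : ℕ → ℝ} (hx : Monotone x) {n k : ℕ} (hk : k < n) :
    Set.uIcc (x k) (x (k + 1)) ⊆ Set.Icc (x 0) (x n) := by
  rw [Set.uIcc_of_le (hx k.le_succ)]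
  exact Set.Icc_subset_Icc (hx k.zero_le) (hx hk)

theorem IntervalIntegrable.mono_succ_of_monotone {E : Type*} [NormedAddCommGroup E] {f : ℝ → E}
    {x : ℕ → ℝ} {n k : ℕ} (hf : IntervalIntegrable f volume (x 0) (x n)) (hx : Monotone x)
    (hk : k < n) : IntervalIntegrable f volume (x k) (x (k + 1)) :=
  hf.mono_set <| Set.uIcc_of_le (hx n.zero_le) ▸ hx.uIcc_succ_subset_Icc hk

theorem intervalIntegral.integral_eq_sum_of_eqOn_Ioo {E : Type*} [NormedAddCommGroup E]
    [NormedSpace ℝ E] {x : ℕ → ℝ} (hx : Monotone x) {n : ℕ} {g : ℝ → E} {h : ℕ → ℝ → E}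
    (hh : ∀ k < n, IntervalIntegrable (h k) volume (x k) (x (k + 1)))
    (hg : ∀ k < n, Set.EqOn g (h k) (Set.Ioo (x k) (x (k + 1)))) :
    ∫ u in x 0..x n, g u = ∑ k ∈ Finset.range n, ∫ u in x k..x (k + 1), h k u := by
  have hg' : ∀ k < n, Set.EqOn (h k) g (Set.uIoo (x k) (x (k + 1))) := fun k hk => by
    rw [Set.uIoo_of_le (hx k.le_succ)]
    exact (hg k hk).symm
  rw [← sum_integral_adjacent_intervals fun k hk => (hh k hk).congr_uIoo (hg' k hk)]
  exact Finset.sum_congr rfl fun k hk => (integral_congr_uIoo (hg' k (Finset.mem_range.1 hk))).symm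

theorem intervalIntegral.integral_add_integral_sub_midpoint_mul_deriv {f f' : ℝ → ℂ} {a b : ℝ}
    (hf : ∀ t ∈ Set.uIcc a b, HasDerivAt f (f' t) t) (hf' : IntervalIntegrable f' volume a b) :
    (∫ u in a..b, f u) + ∫ u in a..b, ((u - (a + b) / 2 : ℝ) : ℂ) * f' u =
      ((b - a) / 2 : ℝ) * (f a + f b) := by
  have hmid : ∀ t, HasDerivAt (fun u : ℝ => ((u - (a + b) / 2 : ℝ) : ℂ)) 1 t := fun t => by
    simpa using ((hasDerivAt_id t).sub_const ((a + b) / 2)).ofReal_comp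
  rw [integral_mul_deriv_eq_deriv_mul (fun t _ => hmid t) hf intervalIntegrable_const hf']
  simp only [one_mul]
  push_cast
  ring

section Partition

variable {f f' : ℝ → ℂ} {x : ℕ → ℝ} {n : ℕ}

theorem intervalIntegral.integral_mul_deriv_eq_sum_of_eqOn_Ioo (hx : Monotone x)
    (hf : ∀ t ∈ Set.Icc (x 0) (x n), HasDerivAt f (f' t) t)
    (hf' : IntervalIntegrable f' volume (x 0) (x n)) {g : ℝ → ℂ} (c : ℕ → ℂ)
    (hg : ∀ k < n, ∀ u ∈ Set.Ioo (x k) (x (k + 1)), g u = c k) :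
    ∫ u in x 0..x n, g u * f' u = ∑ k ∈ Finset.range n, c k * (f (x (k + 1)) - f (x k)) := by
  rw [integral_eq_sum_of_eqOn_Ioo hx (fun k hk => (hf'.mono_succ_of_monotone hx hk).const_mul (c k))
    fun k hk u hu => by simp only [hg k hk u hu]]
  refine Finset.sum_congr rfl fun k hk => ?_
  have hk := Finset.mem_range.1 hk
  rw [integral_const_mul, integral_eq_sub_of_hasDerivAt
    (fun t ht => hf t (hx.uIcc_succ_subset_Icc hk ht)) (hf'.mono_succ_of_monotone hx hk)]

theorem intervalIntegral.integral_add_integral_mul_deriv_eq_sum_of_eqOn_Ioo (hx : Monotone x)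
    (hf : ∀ t ∈ Set.Icc (x 0) (x n), HasDerivAt f (f' t) t)
    (hf' : IntervalIntegrable f' volume (x 0) (x n)) {g : ℝ → ℝ}
    (hg : ∀ k < n, ∀ u ∈ Set.Ioo (x k) (x (k + 1)), g u = u - (x k + x (k + 1)) / 2) :
    (∫ u in x 0..x n, f u) + ∫ u in x 0..x n, (g u : ℂ) * f' u =
      ∑ k ∈ Finset.range n, ((x (k + 1) - x k) / 2 : ℝ) * (f (x k) + f (x (k + 1))) := by
  have hfk : ∀ k < n, IntervalIntegrable f volume (x k) (x (k + 1)) := fun k hk =>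
    ContinuousOn.intervalIntegrable fun t ht =>
      (hf t (hx.uIcc_succ_subset_Icc hk ht)).continuousAt.continuousWithinAt
  rw [integral_eq_sum_of_eqOn_Ioo hx (g := fun u => (g u : ℂ) * f' u)
    (h := fun k u => ((u - (x k + x (k + 1)) / 2 : ℝ) : ℂ) * f' u)
    (fun k hk => (hf'.mono_succ_of_monotone hx hk).continuousOn_mul (by fun_prop))
    fun k hk u hu => by simp only [hg k hk u hu], ← sum_integral_adjacent_intervals hfk,
    ← Finset.sum_add_distrib]
  refine Finset.sum_congr rfl fun k hk => ?_
  have hk := Finset.mem_range.1 hk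
  exact integral_add_integral_sub_midpoint_mul_deriv
    (fun t ht => hf t (hx.uIcc_succ_subset_Icc hk ht)) (hf'.mono_succ_of_monotone hx hk)

end Partition

section UniformPartition

variable {q : ℕ} {f f' : ℝ → ℂ}

theorem monotone_natCast_div (q : ℕ) : Monotone fun k : ℕ => (k : ℝ) / q := fun _ _ h =>
  div_le_div_of_nonneg_right (Nat.cast_le.2 h) q.cast_nonneg

theorem Int.floor_natCast_mul_eq_of_mem_Ioo (hq : 0 < q) {k : ℕ} {u : ℝ}
    (hu : u ∈ Set.Ioo ((k : ℝ) / q) ((k + 1 : ℕ) / q)) : ⌊(q : ℝ) * u⌋ = k := by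
  have hq' : (0 : ℝ) < q := Nat.cast_pos.2 hq
  rw [Set.mem_Ioo, div_lt_iff₀ hq', lt_div_iff₀ hq'] at hu
  push_cast at hu
  rw [Int.floor_eq_iff]
  push_cast
  constructor <;> linarith

theorem mem_Ioc_of_mem_Ioo_natCast_div (hq : 0 < q) {k : ℕ} (hk : k < q) {u : ℝ}
    (hu : u ∈ Set.Ioo ((k : ℝ) / q) ((k + 1 : ℕ) / q)) : u ∈ Set.Ioc (0 : ℝ) 1 :=
  ⟨lt_of_le_of_lt (by positivity) hu.1,
    hu.2.le.trans (div_le_one_of_le₀ (by exact_mod_cast hk) (Nat.cast_nonneg q))⟩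

theorem integral_add_integral_sawtooth_mul_deriv (hq : 0 < q)
    (hf : ∀ t ∈ Set.Icc (0 : ℝ) 1, HasDerivAt f (f' t) t)
    (hf' : IntervalIntegrable f' volume 0 1) (hper : f 0 = f 1) :
    (∫ u in (0 : ℝ)..1, f u) +
        ∫ u in (0 : ℝ)..1,
          (((1 / (q : ℝ)) * ((q : ℝ) * u - ⌊(q : ℝ) * u⌋ - 1 / 2) : ℝ) : ℂ) * f' u =
      (1 / q) * ∑ k ∈ Finset.range q, f ((k + 1 : ℕ) / q) := by
  have hx0 : ((0 : ℕ) : ℝ) / q = 0 := by simp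
  have hxq : ((q : ℕ) : ℝ) / q = 1 := div_self (by positivity)
  have key := integral_add_integral_mul_deriv_eq_sum_of_eqOn_Ioo (monotone_natCast_div q) (n := q)
    (by simpa only [hx0, hxq] using hf) (by simpa only [hx0, hxq] using hf')
    (g := fun u => (1 / (q : ℝ)) * ((q : ℝ) * u - ⌊(q : ℝ) * u⌋ - 1 / 2))
    fun k _ u hu => by
      rw [Int.floor_natCast_mul_eq_of_mem_Ioo hq hu]
      push_cast
      field_simp
      ring
  simp only [hx0, hxq] at key
  rw [key]
  have hshift : ∑ k ∈ Finset.range q, f (k / q) = ∑ k ∈ Finset.range q, f ((k + 1 : ℕ) / q) := by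
    have h := (Finset.sum_range_succ (fun k : ℕ => f (k / q)) q).symm.trans
      (Finset.sum_range_succ' _ q)
    rw [hxq, hx0, hper] at h
    exact add_right_cancel h
  calc ∑ k ∈ Finset.range q, (((k + 1 : ℕ) / q - k / q) / 2 : ℝ) * (f (k / q) + f ((k + 1 : ℕ) / q))
      = ∑ k ∈ Finset.range q, (1 / (2 * q) : ℂ) * (f (k / q) + f ((k + 1 : ℕ) / q)) := by
        refine Finset.sum_congr rfl fun k _ => ?_
        push_cast
        field_simp
        ring
    _ = (1 / q) * ∑ k ∈ Finset.range q, f ((k + 1 : ℕ) / q) := by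
        rw [← Finset.mul_sum, Finset.sum_add_distrib, hshift]
        ring

theorem integral_const_sub_sum_Icc_floor_mul_deriv (hq : 0 < q)
    (hf : ∀ t ∈ Set.Icc (0 : ℝ) 1, HasDerivAt f (f' t) t)
    (hf' : IntervalIntegrable f' volume 0 1) (hper : f 0 = f 1) {g : ℝ → ℂ} (c : ℂ)
    (w : ℤ → ℂ) (hw : ∑ j ∈ Finset.range q, w (j + 1) = 0)
    (hg : ∀ u ∈ Set.Ioc (0 : ℝ) 1,
      g u = c - (1 / (q : ℂ)) * (1 / 2 + ∑ ℓ ∈ Finset.Icc (1 : ℤ) ⌊(q : ℝ) * u⌋, w ℓ)) :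
    ∫ u in (0 : ℝ)..1, g u * f' u =
      (1 / q) * ∑ k ∈ Finset.range q, w (k + 1) * f ((k + 1 : ℕ) / q) := by
  have hx0 : ((0 : ℕ) : ℝ) / q = 0 := by simp
  have hxq : ((q : ℕ) : ℝ) / q = 1 := div_self (by positivity)
  have key := integral_mul_deriv_eq_sum_of_eqOn_Ioo (monotone_natCast_div q) (n := q) (g := g)
    (by simpa only [hx0, hxq] using hf) (by simpa only [hx0, hxq] using hf')
    (fun k => (c - 1 / (2 * q)) - ∑ j ∈ Finset.range k, (1 / (q : ℂ)) * w (j + 1))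
    fun k hk u hu => by
      rw [hg u (mem_Ioc_of_mem_Ioo_natCast_div hq hk hu), Int.floor_natCast_mul_eq_of_mem_Ioo hq hu,
        Finset.sum_Icc_one_natCast, ← Finset.mul_sum]
      ring
  simp only [hx0, hxq] at key
  rw [key, Finset.sum_range_sub_partialSum_mul_sub _ _ (fun k : ℕ => f (k / q))
      (by rw [← Finset.mul_sum, hw, mul_zero]) (by simp only [hx0, hxq, hper]),
    Finset.mul_sum]
  exact Finset.sum_congr rfl fun k _ => mul_assoc _ _ _

end UniformPartition

theorem Complex.exp_two_pi_I_mul_natCast_div (q m : ℕ) :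
    exp (2 * Real.pi * I * m / q) = exp (2 * Real.pi * I / q) ^ m := by
  rw [← exp_nat_mul]
  ring_nf

theorem Complex.exp_neg_two_pi_I_mul_natSub_div {q r : ℕ} (hq : q ≠ 0) (hr : r ≤ q) (a : ℕ) :
    exp (-(2 * Real.pi * I * ((q - r : ℕ) : ℂ) * a / q)) = exp (2 * Real.pi * I * r * a / q) := by
  have harg : -(2 * Real.pi * I * ((q - r : ℕ) : ℂ) * a / q) =
      2 * Real.pi * I * r * a / q + (-a : ℤ) * (2 * Real.pi * I) := by
    rw [Nat.cast_sub hr]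
    field_simp
    push_cast
    ring
  rw [harg, exp_add, exp_int_mul_two_pi_mul_I, mul_one]

theorem Complex.exp_neg_two_pi_I_mul_div_eq_pow {q a : ℕ} (hq : q ≠ 0) (ha : a ≤ q) (s : ℕ) :
    exp (-(2 * Real.pi * I * s * a / q)) = exp (2 * Real.pi * I / q) ^ (s * (q - a)) := by
  have h := exp_neg_two_pi_I_mul_natSub_div hq (Nat.sub_le q a) s
  rw [Nat.sub_sub_self ha] at h
  rw [← exp_two_pi_I_mul_natCast_div, mul_right_comm _ (s : ℂ), h]
  push_cast
  ring_nf

theorem Complex.exp_two_pi_I_mul_intCast_succ_mul_div (q s j : ℕ) :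
    exp (2 * Real.pi * I * ((j + 1 : ℤ) : ℂ) * s / q) =
      exp (2 * Real.pi * I / q) ^ (s * (j + 1)) := by
  rw [← exp_two_pi_I_mul_natCast_div]
  push_cast
  ring_nf

theorem Complex.discrete_fourier_inversion {q a : ℕ} (ha : a ∈ Finset.Icc 1 q) (F : ℕ → ℂ)
    {c₀ : ℂ} {c : ℕ → ℂ} (hc₀ : c₀ = (1 / q) * ∑ k ∈ Finset.range q, F (k + 1))
    (hc : ∀ s ∈ Finset.Icc 1 (q - 1),
      c s = (1 / q) * ∑ k ∈ Finset.range q, exp (2 * Real.pi * I / q) ^ (s * (k + 1)) * F (k + 1)) :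
    F a = c₀ + ∑ s ∈ Finset.Icc 1 (q - 1), exp (-(2 * Real.pi * I * s * a / q)) * c s := by
  obtain ⟨ha1, ha2⟩ := Finset.mem_Icc.1 ha
  have hq0 : q ≠ 0 := by omega
  have hinv := (isPrimitiveRoot_exp q hq0).sum_range_pow_mul_sum_range F ha
  rw [Finset.sum_range_eq_add_sum_Icc hq0] at hinv
  simp only [zero_mul, pow_zero, one_mul] at hinv
  rw [hc₀, Finset.sum_congr (s₁ := Finset.Icc 1 (q - 1)) rfl fun s hs => by
    rw [hc s hs, exp_neg_two_pi_I_mul_div_eq_pow hq0 ha2]]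
  simp only [mul_left_comm _ (1 / (q : ℂ)), ← Finset.mul_sum, ← mul_add, hinv]
  field_simp

theorem fourier_theorem2_finite_general (q : ℕ) (hq : 1 ≤ q)
    (f f' : ℝ → ℂ)
    (hdiff : ∀ x ∈ Set.Icc (0 : ℝ) 1, HasDerivAt f (f' x) x)
    (hint : IntervalIntegrable f' volume 0 1)
    (hper : f 0 = f 1)
    (cc : ℕ → ℂ)
    (Ψ : ℕ → ℝ → ℂ)
    (hΨ0 : ∀ u : ℝ, Ψ 0 u =
      (((1 / (q : ℝ)) * ((q : ℝ) * u - ⌊(q : ℝ) * u⌋ - 1 / 2) : ℝ) : ℂ))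
    (hΨ : ∀ s : ℕ, 1 ≤ s → s ≤ q - 1 → ∀ u ∈ Set.Ioc (0 : ℝ) 1,
      Ψ s u = cc s - (1 / (q : ℂ)) * (1 / 2 +
        ∑ ℓ ∈ Finset.Icc (1 : ℤ) ⌊(q : ℝ) * u⌋,
          Complex.exp (2 * Real.pi * Complex.I * ℓ * s / q)))
    (b : ℕ → ℂ)
    (hb0 : b 0 = (∫ u in (0:ℝ)..1, f u) + ∫ u in (0:ℝ)..1, Ψ 0 u * f' u)
    (hb : ∀ r : ℕ, 1 ≤ r → r ≤ q - 1 →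
      b r = ∫ u in (0:ℝ)..1, Ψ (q - r) u * f' u) :
    ∀ a : ℕ, 1 ≤ a → a ≤ q →
      f ((a : ℝ) / q) =
          ((∫ u in (0:ℝ)..1, f u) + ∫ u in (0:ℝ)..1, Ψ 0 u * f' u)
            + ∑ s ∈ Finset.Icc 1 (q - 1),
                Complex.exp (-(2 * Real.pi * Complex.I * s * a / q)) *
                  ∫ u in (0:ℝ)..1, Ψ s u * f' u
        ∧ f ((a : ℝ) / q) =
            ∑ r ∈ Finset.range q, b r * Complex.exp (2 * Real.pi * Complex.I * r * a / q) := by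
  intro a ha1 ha2
  have hq0 : q ≠ 0 := by omega
  have hfirst : f (a / q) = ((∫ u in (0 : ℝ)..1, f u) + ∫ u in (0 : ℝ)..1, Ψ 0 u * f' u) +
      ∑ s ∈ Finset.Icc 1 (q - 1),
        Complex.exp (-(2 * Real.pi * Complex.I * s * a / q)) * ∫ u in (0 : ℝ)..1, Ψ s u * f' u := by
    refine Complex.discrete_fourier_inversion (Finset.mem_Icc.2 ⟨ha1, ha2⟩)
      (fun k : ℕ => f (k / q)) ?_ fun s hs => ?_
    · rw [show Ψ 0 = _ from funext hΨ0,
        integral_add_integral_sawtooth_mul_deriv (by omega) hdiff hint hper]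
    obtain ⟨hs1, hs2⟩ := Finset.mem_Icc.1 hs
    rw [integral_const_sub_sum_Icc_floor_mul_deriv (by omega) hdiff hint hper (cc s) _ ?_
      (hΨ s hs1 hs2)]
    · simp only [Complex.exp_two_pi_I_mul_intCast_succ_mul_div]
    · simp only [Complex.exp_two_pi_I_mul_intCast_succ_mul_div,
        (Complex.isPrimitiveRoot_exp q hq0).sum_range_pow_mul_succ_eq_zero
          (Nat.not_dvd_of_pos_of_lt hs1 (by omega))]
  have hreflect :
      ∑ r ∈ Finset.Icc 1 (q - 1), b r * Complex.exp (2 * Real.pi * Complex.I * r * a / q) =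
      ∑ s ∈ Finset.Icc 1 (q - 1),
        Complex.exp (-(2 * Real.pi * Complex.I * s * a / q)) * ∫ u in (0 : ℝ)..1, Ψ s u * f' u := by
    refine Eq.trans ?_ (Finset.sum_Icc_one_sub_reflect _ q)
    refine Finset.sum_congr rfl fun r hr => ?_
    obtain ⟨hr1, hr2⟩ := Finset.mem_Icc.1 hr
    rw [hb r hr1 hr2, Complex.exp_neg_two_pi_I_mul_natSub_div hq0 (by omega), mul_comm]
  refine ⟨hfirst, ?_⟩
  rw [Finset.sum_range_eq_add_sum_Icc hq0, hreflect, hb0, hfirst]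
  simp

/-- Theorem 2 of the paper (finite Fourier series modulo `q`): for `f` differentiable
on `[0,1]` with integrable derivative and `f(0) = f(1)`, and with
`c(s,q) = -(1/(2πi))(1/s - 2s ∑_{m≥1} 1/(m²q²-s²))`,
`Ψ_s(u) = c(s,q) - (1/q)(1/2 + ∑_{ℓ=1}^{⌊qu⌋} e^{2πiℓs/q})` on `(0,1]` for
`1 ≤ s ≤ q-1`, and `Ψ_0(u) = (1/q)(qu - ⌊qu⌋ - 1/2)`, one has for every
`1 ≤ a ≤ q` that
`f(a/q) = (∫_0^1 f + ∫_0^1 Ψ_0 f') + ∑_{s=1}^{q-1} e^{-2πisa/q} ∫_0^1 Ψ_s f'`,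
i.e. `f(a/q) = ∑_{r=0}^{q-1} b_r e^{2πira/q}` with coefficients `b_0 = ∫_0^1 f + ∫_0^1 Ψ_0 f'`
and `b_r = ∫_0^1 Ψ_{q-r} f'` (for `1 ≤ r ≤ q-1`) not depending on `a`. -/
theorem fourier_theorem2_finite (q : ℕ) (hq : 1 ≤ q)
    (f f' : ℝ → ℂ)
    (hdiff : ∀ x ∈ Set.Icc (0 : ℝ) 1, HasDerivAt f (f' x) x)
    (hint : IntervalIntegrable f' volume 0 1)
    (hper : f 0 = f 1)
    (cc : ℕ → ℂ)
    (hcc : ∀ s : ℕ, 1 ≤ s → s ≤ q - 1 →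
      cc s = -(1 / (2 * Real.pi * Complex.I)) *
        ((1 / (s : ℂ)) - 2 * (s : ℂ) *
          ∑' m : ℕ+, (1 : ℂ) / ((m : ℂ) ^ 2 * (q : ℂ) ^ 2 - (s : ℂ) ^ 2)))
    (Ψ : ℕ → ℝ → ℂ)
    (hΨ0 : ∀ u : ℝ, Ψ 0 u =
      (((1 / (q : ℝ)) * ((q : ℝ) * u - ⌊(q : ℝ) * u⌋ - 1 / 2) : ℝ) : ℂ))
    (hΨ : ∀ s : ℕ, 1 ≤ s → s ≤ q - 1 → ∀ u ∈ Set.Ioc (0 : ℝ) 1,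
      Ψ s u = cc s - (1 / (q : ℂ)) * (1 / 2 +
        ∑ ℓ ∈ Finset.Icc (1 : ℤ) ⌊(q : ℝ) * u⌋,
          Complex.exp (2 * Real.pi * Complex.I * ℓ * s / q)))
    (b : ℕ → ℂ)
    (hb0 : b 0 = (∫ u in (0:ℝ)..1, f u) + ∫ u in (0:ℝ)..1, Ψ 0 u * f' u)
    (hb : ∀ r : ℕ, 1 ≤ r → r ≤ q - 1 →
      b r = ∫ u in (0:ℝ)..1, Ψ (q - r) u * f' u) :
    ∀ a : ℕ, 1 ≤ a → a ≤ q →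
      f ((a : ℝ) / q) =
          ((∫ u in (0:ℝ)..1, f u) + ∫ u in (0:ℝ)..1, Ψ 0 u * f' u)
            + ∑ s ∈ Finset.Icc 1 (q - 1),
                Complex.exp (-(2 * Real.pi * Complex.I * s * a / q)) *
                  ∫ u in (0:ℝ)..1, Ψ s u * f' u
        ∧ f ((a : ℝ) / q) =
            ∑ r ∈ Finset.range q, b r * Complex.exp (2 * Real.pi * Complex.I * r * a / q) :=
  fourier_theorem2_finite_general q hq f f' hdiff hint hper cc Ψ hΨ0 hΨ b hb0 hb
end

section
/- Let c < a < d be real numbers, set δ := (d-c)/2, and let f : ℝ → ℂ be differentiable at every point of [c,d] with derivative f' interval-integrable on [c,d] and with f(c) = f(d). Then for every integer ℓ ≥ 1, the symmetric partial sum of the nonconstant Fourier terms of f at a on [c,d] satisfies ∑_{n=-ℓ, n≠0}^{ℓ} c_n e^{iπna/δ} = - ∑_{n=1}^{ℓ} (1/(πn)) ∫_c^d sin(πn(u-a)/δ) f'(u) du, where c_n := (1/(2δ)) ∫_c^d f(u) e^{-iπnu/δ} du. -/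
/-!
The paper's coefficient `c_n` on `[c, d]` is Mathlib's `fourierCoeffOn` for the period
`d - c = 2δ`. For `n ≠ 0`, integration by parts gives `c_n(f) = (d - c)/(2πin) · c_n(f')`; the
boundary term vanishes because `f(c) = f(d)` and the character `e^{-iπnu/δ}` has period `2δ`.
Pairing the terms `n` and `-n` of the partial sum at `a`, the identity
`e^{-iθ} - e^{iθ} = -2i sin θ` with `θ = πn(u - a)/δ` turns them into
`-(1/(πn)) ∫_c^d sin(πn(u - a)/δ) f'(u) du`.
-/

open MeasureTheory intervalIntegral

theorem Finset.sum_Icc_neg_erase_zero {M : Type*} [AddCommMonoid M] (g : ℤ → M) (ℓ : ℕ) :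
    ∑ n ∈ (Icc (-(ℓ : ℤ)) ℓ).erase 0, g n = ∑ n ∈ Icc 1 ℓ, (g n + g (-n)) := by
  induction ℓ with
  | zero => simp
  | succ ℓ ih =>
    have hsplit : (Icc (-((ℓ + 1 : ℕ) : ℤ)) (ℓ + 1 : ℕ)).erase 0
        = insert ((ℓ + 1 : ℕ) : ℤ) (insert (-((ℓ + 1 : ℕ) : ℤ)) ((Icc (-(ℓ : ℤ)) ℓ).erase 0)) := by
      ext n
      simp only [mem_erase, mem_Icc, mem_insert]
      omega
    rw [hsplit, sum_insert (by simp; omega), sum_insert (by simp), ih, sum_Icc_succ_top (by omega)]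
    abel

theorem Complex.exp_neg_mul_I_sub_exp_mul_I (z : ℂ) :
    exp (-z * I) - exp (z * I) = -2 * I * sin z := by
  linear_combination I * two_sin z + (exp (-z * I) - exp (z * I)) * I_sq

section

open Complex Real

theorem fourierCoeffOn_of_hasDerivAt_of_eq {a b : ℝ} (hab : a < b) {f f' : ℝ → ℂ} {n : ℤ}
    (hn : n ≠ 0) (hf : ∀ x ∈ Set.uIcc a b, HasDerivAt f (f' x) x)
    (hf' : IntervalIntegrable f' volume a b) (hfab : f a = f b) :
    fourierCoeffOn hab f n = (b - a) / (2 * π * I * n) * fourierCoeffOn hab f' n := by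
  have : (n : ℂ) ≠ 0 := Int.cast_ne_zero.mpr hn
  rw [fourierCoeffOn_of_hasDerivAt hab hn hf hf', hfab, sub_self, mul_zero, zero_sub]
  field_simp

theorem fourierCoeffOn_mul_fourier_sub_neg {a b : ℝ} (hab : a < b) {g : ℝ → ℂ}
    (hg : IntervalIntegrable g volume a b) (n : ℤ) (x : ℝ) :
    fourierCoeffOn hab g n * fourier n (x : AddCircle (b - a))
      - fourierCoeffOn hab g (-n) * fourier (-n) (x : AddCircle (b - a))
      = -2 * I / (b - a) * ∫ u in a..b, (Real.sin (2 * π * n * (u - x) / (b - a)) : ℂ) * g u := by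
  have hint : ∀ m k : ℤ, IntervalIntegrable
      (fun u : ℝ => fourier m (u : AddCircle (b - a)) * g u * fourier k (x : AddCircle (b - a)))
      volume a b := fun m _ =>
    (hg.continuousOn_mul ((map_continuous (fourier m)).comp
      (AddCircle.continuous_mk' _)).continuousOn).mul_const _
  have hpointwise (u : ℝ) :
      fourier (-n) (u : AddCircle (b - a)) * g u * fourier n (x : AddCircle (b - a))
        - fourier n (u : AddCircle (b - a)) * g u * fourier (-n) (x : AddCircle (b - a))
        = -2 * I * ((Real.sin (2 * π * n * (u - x) / (b - a)) : ℂ) * g u) := by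
    set z : ℂ := ((2 * π * n * (u - x) / (b - a) : ℝ) : ℂ)
    have hneg : fourier (-n) (u : AddCircle (b - a)) * fourier n (x : AddCircle (b - a))
        = exp (-z * I) := by
      rw [fourier_coe_apply, fourier_coe_apply, ← Complex.exp_add]
      congr 1
      push_cast [z]
      ring
    have hpos : fourier n (u : AddCircle (b - a)) * fourier (-n) (x : AddCircle (b - a))
        = exp (z * I) := by
      rw [fourier_coe_apply, fourier_coe_apply, ← Complex.exp_add]
      congr 1
      push_cast [z]
      ring
    rw [ofReal_sin]
    linear_combination g u * (hneg - hpos + exp_neg_mul_I_sub_exp_mul_I z)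
  simp only [fourierCoeffOn_eq_integral, smul_eq_mul, real_smul, neg_neg]
  rw [mul_assoc, mul_assoc, ← mul_sub, ← intervalIntegral.integral_mul_const,
    ← intervalIntegral.integral_mul_const, ← integral_sub (hint _ _) (hint _ _),
    integral_congr fun u _ => hpointwise u, intervalIntegral.integral_const_mul]
  push_cast
  ring

theorem fourier_coe_apply_half_period {a b δ : ℝ} (hδ : δ = (b - a) / 2) (n : ℤ) (x : ℝ) :
    fourier n (x : AddCircle (b - a)) = exp (I * π * n * x / δ) := by
  rw [fourier_coe_apply, hδ]
  congr 1
  push_cast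
  rw [div_div_eq_mul_div]
  ring

theorem fourierCoeffOn_eq_integral_half_period {a b δ : ℝ} (hab : a < b) (hδ : δ = (b - a) / 2)
    (f : ℝ → ℂ) (n : ℤ) :
    fourierCoeffOn hab f n
      = ((1 / (2 * δ) : ℝ) : ℂ) * ∫ u in a..b, f u * exp (-(I * π * n * u) / δ) := by
  rw [fourierCoeffOn_eq_integral, real_smul]
  congr 1
  · rw [hδ]
    ring_nf
  refine integral_congr fun u _ => ?_
  rw [smul_eq_mul, mul_comm, fourier_coe_apply_half_period hδ]
  congr 2
  push_cast
  ring

theorem fourierCoeffOn_mul_fourier_add_neg_of_hasDerivAt {a b δ : ℝ} (hab : a < b)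
    (hδ : δ = (b - a) / 2) {f f' : ℝ → ℂ} {n : ℤ} (hn : n ≠ 0)
    (hf : ∀ x ∈ Set.uIcc a b, HasDerivAt f (f' x) x) (hf' : IntervalIntegrable f' volume a b)
    (hfab : f a = f b) (x : ℝ) :
    fourierCoeffOn hab f n * fourier n (x : AddCircle (b - a))
      + fourierCoeffOn hab f (-n) * fourier (-n) (x : AddCircle (b - a))
      = -(((1 / (π * n) : ℝ) : ℂ) * ∫ u in a..b, (Real.sin (π * n * (u - x) / δ) : ℂ) * f' u) := by
  have hba : (b : ℂ) - a ≠ 0 := by exact_mod_cast (sub_pos.mpr hab).ne'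
  have hn' : (n : ℂ) ≠ 0 := Int.cast_ne_zero.mpr hn
  have hπ : (π : ℂ) ≠ 0 := ofReal_ne_zero.mpr pi_ne_zero
  have hsin (u : ℝ) :
      Real.sin (2 * π * n * (u - x) / (b - a)) = Real.sin (π * n * (u - x) / δ) := by
    rw [hδ, div_div_eq_mul_div]
    congr 1
    ring
  have hpair := fourierCoeffOn_mul_fourier_sub_neg hab hf' n x
  simp only [hsin] at hpair
  set P := ∫ u in a..b, (Real.sin (π * n * (u - x) / δ) : ℂ) * f' u
  rw [fourierCoeffOn_of_hasDerivAt_of_eq hab hn hf hf' hfab,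
    fourierCoeffOn_of_hasDerivAt_of_eq hab (neg_ne_zero.mpr hn) hf hf' hfab]
  calc _ = (b - a) / (2 * π * I * n) * (fourierCoeffOn hab f' n * fourier n (x : AddCircle (b - a))
          - fourierCoeffOn hab f' (-n) * fourier (-n) (x : AddCircle (b - a))) := by
        push_cast
        ring
    _ = _ := by
        rw [hpair]
        push_cast
        field_simp

end

/-- The partial-sum identity from the proof of the Cesàro part of the paper's
Theorem 1: for `f` differentiable on `[c,d]` with integrable derivative and
`f(c) = f(d)`, for every `ℓ ≥ 1`,
`∑_{n=-ℓ, n≠0}^{ℓ} c_n e^{iπna/δ} = -∑_{n=1}^{ℓ} (1/(πn)) ∫_c^d sin(πn(u-a)/δ) f'(u) du`,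
where `c_n = (1/(2δ)) ∫_c^d f(u) e^{-iπnu/δ} du` and `δ = (d-c)/2`. -/
theorem fourier_partial_sum_identity (c a d : ℝ) (hca : c < a) (had : a < d)
    (δ : ℝ) (hδ : δ = (d - c) / 2)
    (f f' : ℝ → ℂ)
    (hdiff : ∀ x ∈ Set.Icc c d, HasDerivAt f (f' x) x)
    (hint : IntervalIntegrable f' volume c d)
    (hper : f c = f d) :
    ∀ ℓ : ℕ, 1 ≤ ℓ →
      ∑ n ∈ (Finset.Icc (-(ℓ : ℤ)) (ℓ : ℤ)).erase 0,
          (((1 / (2 * δ) : ℝ) : ℂ) *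
              ∫ u in c..d, f u * Complex.exp (-(Complex.I * Real.pi * n * u) / δ)) *
            Complex.exp (Complex.I * Real.pi * n * a / δ)
        = -∑ n ∈ Finset.Icc 1 ℓ, ((1 / (Real.pi * n) : ℝ) : ℂ) *
            ∫ u in c..d, ((Real.sin (Real.pi * n * (u - a) / δ) : ℝ) : ℂ) * f' u := by
  intro ℓ _
  have hcd : c < d := hca.trans had
  have hdiff' : ∀ x ∈ Set.uIcc c d, HasDerivAt f (f' x) x := by rwa [Set.uIcc_of_le hcd.le]
  simp only [← fourierCoeffOn_eq_integral_half_period hcd hδ, ← fourier_coe_apply_half_period hδ,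
    Finset.sum_Icc_neg_erase_zero, ← Finset.sum_neg_distrib]
  refine Finset.sum_congr rfl fun n hn => ?_
  have hn0 : (n : ℤ) ≠ 0 := by
    simp only [Finset.mem_Icc] at hn
    omega
  simpa using fourierCoeffOn_mul_fourier_add_neg_of_hasDerivAt hcd hδ hn0 hdiff' hint hper a
end
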